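/- If the preference relations of all players in a finite sequential game are acyclic, then the Subgame-Improvement dynamics terminates: there is no infinite sequence s⁰ ⇀_{SI} s¹ ⇀_{SI} s² ⇀_{SI} ... of strategy profiles. -/

import Mathlib

namespace SeqGame

inductive GameTree (N O : Type) : Type where
  | leaf (o : O) : GameTree N O
  | node (i : N) (children : List (GameTree N O)) : GameTree N O

namespace GameTree

variable {N O : Type}

/-- The subtree of `T` at position `p` (a list of child indices), if it exists. -/
def subtree : GameTree N O → List ℕ → Option (GameTree N O)
  | t, [] => some t
  | leaf _, _ :: _ => none
  | node _ c, k :: p =>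
    match getElem? c k with
    | some t => subtree t p
    | none => none

/-- A strategy profile: a choice of a child index at every position. -/
abbrev Profile := List ℕ → ℕ

/-- A profile is legal if it chooses an existing child at every internal node. -/
def Legal (T : GameTree N O) (s : Profile) : Prop :=
  ∀ p i c, T.subtree p = some (node i c) → s p < c.length

/-- The profiles `s` and `s'` differ at the (valid, internal) node `p`. -/
def Differs (T : GameTree N O) (s s' : Profile) (p : List ℕ) : Prop :=
  (∃ i c, T.subtree p = some (node i c)) ∧ s p ≠ s' p

/-- The outcome reached when playing according to the profile `s`. -/
def outcome : GameTree N O → Profile → Option O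
  | leaf o, _ => some o
  | node _ c, s =>
    match h : getElem? c (s []) with
    | some t => outcome t (fun p => s (s [] :: p))
    | none => none
decreasing_by
  have hm : t ∈ c := by
    exact List.mem_of_getElem? h
  have := List.sizeOf_lt_of_mem hm
  simp only [node.sizeOf_spec]
  omega

/-- The profile `s` re-rooted at position `p`. -/
def shift (s : Profile) (p : List ℕ) : Profile := fun q => s (p ++ q)

/-- The owner of the node at position `p`, if it is internal. -/
def ownerAt (T : GameTree N O) (p : List ℕ) : Option N :=
  match T.subtree p with
  | some (node i _) => some i
  | _ => none

/-- `p` lies along the play induced by `s`. -/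
def OnPlay (s : Profile) (p : List ℕ) : Prop :=
  ∀ q k, (q ++ [k]) <+: p → s q = k

/-- Improvement property: every player who changes strictly improves the outcome. -/
def Iprop (T : GameTree N O) (pref : N → O → O → Prop) (s s' : Profile) : Prop :=
  ∀ p i c, T.subtree p = some (node i c) → s p ≠ s' p →
    ∃ x y, T.outcome s = some x ∧ T.outcome s' = some y ∧ pref i x y

/-- Subgame improvement property. -/
def SIprop (T : GameTree N O) (pref : N → O → O → Prop) (s s' : Profile) : Prop :=
  ∀ p i c, T.subtree p = some (node i c) → s p ≠ s' p →
    ∃ x y, outcome (node i c) (shift s p) = some x ∧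
      outcome (node i c) (shift s' p) = some y ∧ pref i x y

/-- Laziness property: all changed nodes lie along the play induced by `s'`. -/
def Lprop (T : GameTree N O) (s s' : Profile) : Prop :=
  ∀ p, Differs T s s' p → OnPlay s' p

/-- One player property: at most one player changes his strategy. -/
def P1prop (T : GameTree N O) (s s' : Profile) : Prop :=
  ∃ i : N, ∀ p, Differs T s s' p → T.ownerAt p = some i

/-- Atomicity property: at most one node changes. -/
def Aprop (T : GameTree N O) (s s' : Profile) : Prop :=
  ∀ p q, Differs T s s' p → Differs T s s' q → p = q

/-- Names of the update properties. -/
inductive Upd : Type | I | SI | L | P1 | A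
deriving DecidableEq

/-- Interpretation of an update property name. -/
def holds (T : GameTree N O) (pref : N → O → O → Prop) : Upd → Profile → Profile → Prop
  | .I => Iprop T pref
  | .SI => SIprop T pref
  | .L => Lprop T
  | .P1 => P1prop T
  | .A => Aprop T

/-- The X-dynamics: an actual update (between legal profiles) satisfying
all properties in `X`. -/
def XDyn (X : Set Upd) (T : GameTree N O) (pref : N → O → O → Prop)
    (s s' : Profile) : Prop :=
  Legal T s ∧ Legal T s' ∧ (∃ p, Differs T s s' p) ∧ ∀ u ∈ X, holds T pref u s s'

/-- A dynamics terminates iff there is no infinite update sequence. -/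
def Terminates (D : Profile → Profile → Prop) : Prop :=
  ¬ ∃ f : ℕ → Profile, ∀ n, D (f n) (f (n + 1))

/-- `s'` is a deviation from `s` by the coalition `I`. -/
def Deviation (T : GameTree N O) (I : Set N) (s s' : Profile) : Prop :=
  Legal T s' ∧ ∀ p i c, T.subtree p = some (node i c) → i ∉ I → s p = s' p

/-- Nash equilibrium. -/
def IsNE (T : GameTree N O) (pref : N → O → O → Prop) (s : Profile) : Prop :=
  ∀ i s', Deviation T {i} s s' →
    ∀ x y, T.outcome s = some x → T.outcome s' = some y → ¬ pref i x y

/-- Subgame perfect equilibrium: an NE in every subgame. -/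
def IsSPE (T : GameTree N O) (pref : N → O → O → Prop) (s : Profile) : Prop :=
  ∀ p t, T.subtree p = some t → IsNE t pref (shift s p)

/-- Strong Nash equilibrium (Aumann). -/
def IsSNE (T : GameTree N O) (pref : N → O → O → Prop) (s : Profile) : Prop :=
  ∀ I : Set N, I.Nonempty → ∀ s', Deviation T I s s' →
    ∃ i ∈ I, ∀ x y, T.outcome s = some x → T.outcome s' = some y → ¬ pref i x y

/-- A relation is acyclic if it has no cycle. -/
def Acyclic (r : O → O → Prop) : Prop := ∀ x, ¬ Relation.TransGen r x x

/-- Incomparability. -/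
def Incomp (r : O → O → Prop) (x y : O) : Prop := ¬ r x y ∧ ¬ r y x

/-- Strict weak order: irreflexive, transitive, with transitive incomparability. -/
def IsSWO (r : O → O → Prop) : Prop :=
  (∀ x, ¬ r x x) ∧ (∀ x y z, r x y → r y z → r x z) ∧
    (∀ x y z, Incomp r x y → Incomp r y z → Incomp r x z)

/-- Strict linear order: irreflexive, transitive and total. -/
def IsSLO (r : O → O → Prop) : Prop :=
  (∀ x, ¬ r x x) ∧ (∀ x y z, r x y → r y z → r x z) ∧
    (∀ x y, x ≠ y → r x y ∨ r y x)

/-- Absence of the main pattern. -/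
def OutOfMainPattern (pref : N → O → O → Prop) : Prop :=
  ∀ (i j : N) (x y z : O),
    ¬ (pref i x y ∧ pref i y z ∧ pref j y z ∧ pref j z x)

/-- Absence of the secondary pattern. -/
def OutOfSecondaryPattern (pref : N → O → O → Prop) : Prop :=
  ∀ (i j : N) (w x y z : O),
    ¬ (pref i w x ∧ pref i x y ∧ pref i y z ∧
       Incomp (pref j) x z ∧ pref j z w ∧ Incomp (pref j) w y)

/-- Absence of both patterns. -/
def OutOfPattern (pref : N → O → O → Prop) : Prop :=
  OutOfMainPattern pref ∧ OutOfSecondaryPattern pref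

/-- The preferences can be layered: there is an ordered partition of the
outcomes (given by a layer-index function) such that higher layers are
unanimously weakly preferred, and within a layer no two players agree on
one pair while disagreeing on another pair. -/
def CanBeLayered (pref : N → O → O → Prop) : Prop :=
  ∃ ℓ : O → ℕ,
    (∀ x y, ℓ x < ℓ y → ∀ i, ¬ pref i y x) ∧
    (∀ (i j : N) (w x y z : O), ℓ w = ℓ x → ℓ x = ℓ y → ℓ y = ℓ z →
      ¬ (pref i x y ∧ pref j x y ∧ pref i w z ∧ pref j z w))

end GameTree
end SeqGame

/-!
On a single node, the outcome of the subgame is a function of the owner's choice as soon as the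
subgames below it no longer change. From then on every change at the node strictly improves its
owner's outcome, so infinitely many such changes would revisit a choice and close a cycle of that
owner's preference. Hence, by induction on the tree, any sequence of subgame-improvement steps
changes the profile only finitely often.
-/

namespace SeqGame
namespace GameTree

open Relation

section Acyclic

variable {α β : Type}

theorem Acyclic.comap {r : β → β → Prop} (hr : Acyclic r) (f : α → β) :
    Acyclic (Function.onFun r f) :=
  fun a h => hr (f a) (TransGen.lift f le_rfl _ _ h)

theorem Acyclic.map {r : α → α → Prop} (hr : Acyclic r) {f : α → β}
    (hf : Function.Injective f) : Acyclic (Relation.Map r f f) := by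
  have key : ∀ {a b}, TransGen (Relation.Map r f f) a b →
      ∃ x y, f x = a ∧ f y = b ∧ TransGen r x y := by
    intro a b h
    induction h with
    | single h =>
      obtain ⟨x, y, hxy, rfl, rfl⟩ := h
      exact ⟨x, y, rfl, rfl, .single hxy⟩
    | tail _ h ih =>
      obtain ⟨x, y, rfl, hy, hxy⟩ := ih
      obtain ⟨y', z, hyz, hy', rfl⟩ := h
      obtain rfl := hf (hy'.trans hy.symm)
      exact ⟨x, z, rfl, rfl, hxy.tail hyz⟩
  intro a h
  obtain ⟨x, y, rfl, hy, hxy⟩ := key h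
  exact hr x (hf hy ▸ hxy)

theorem Acyclic.finite_setOf_ne_succ {r : α → α → Prop} (hr : Acyclic r) {g : ℕ → α}
    (hg : (Set.range g).Finite) {M : ℕ}
    (hstep : ∀ n, M ≤ n → g n ≠ g (n + 1) → r (g n) (g (n + 1))) :
    {n | g n ≠ g (n + 1)}.Finite := by
  by_contra hinf
  obtain ⟨a, ⟨ha, haM⟩, b, -, hab, hgab⟩ :=
    (Set.Infinite.sdiff hinf (Set.finite_Iio M)).exists_lt_map_eq_of_mapsTo
      (Set.mapsTo_range g _) hg
  have haM : M ≤ a := not_lt.mp haM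
  have hrest : ReflTransGen r (g (a + 1)) (g b) := by
    rw [← reflTransGen_reflGen]
    refine ReflTransGen.lift g (r := fun m n => ReflGen r (g m) (g n)) (fun _ _ h => h) _ _ ?_
    refine reflTransGen_of_succ_of_le _ (fun n hn => ?_) hab
    by_cases hne : g n = g (n + 1)
    · exact hne ▸ ReflGen.refl
    · exact .single (hstep n (haM.trans (a.le_succ.trans hn.1)) hne)
  have hcycle := TransGen.head' (hstep a haM ha) hrest
  rw [← hgab] at hcycle
  exact hr _ hcycle

end Acyclic

variable {N O : Type}

@[elab_as_elim]
theorem induction_on_children {motive : GameTree N O → Prop} (leaf : ∀ o, motive (leaf o))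
    (node : ∀ i cs, (∀ t ∈ cs, motive t) → motive (node i cs)) : ∀ t, motive t
  | .leaf o => leaf o
  | .node i cs => node i cs fun t _ => induction_on_children leaf node t
termination_by t => sizeOf t
decreasing_by
  have := List.sizeOf_lt_of_mem ‹t ∈ cs›
  simp only [GameTree.node.sizeOf_spec]
  omega

@[simp]
theorem subtree_node_cons (i : N) (cs : List (GameTree N O)) (k : ℕ) (p : List ℕ) :
    (node i cs).subtree (k :: p) = (cs[k]?).bind (subtree · p) := by
  simp only [subtree]
  cases cs[k]? <;> rfl

theorem shift_nil (s : Profile) : shift s [] = s := rfl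

theorem outcome_node (i : N) (cs : List (GameTree N O)) (s : Profile) :
    outcome (node i cs) s = (cs[s []]?).bind (outcome · (shift s [s []])) := by
  rw [outcome]
  split <;> rename_i h <;> rw [h] <;> rfl

theorem outcome_congr {t : GameTree N O} {s s' : Profile}
    (h : ∀ p j d, t.subtree p = some (node j d) → s p = s' p) : t.outcome s = t.outcome s' := by
  induction t using induction_on_children generalizing s s' with
  | leaf o => rw [outcome, outcome]
  | node i cs ih =>
    have hroot : s [] = s' [] := h [] i cs rfl
    rw [outcome_node, outcome_node, ← hroot]
    cases hk : cs[s []]? with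
    | none => rfl
    | some t =>
      refine ih t (List.mem_of_getElem? hk) fun q j d hq => ?_
      exact h (s [] :: q) j d (by simp [hk, hq])

theorem Legal.child {i : N} {cs : List (GameTree N O)} {s : Profile} (h : Legal (node i cs) s)
    {k : ℕ} {t : GameTree N O} (hk : cs[k]? = some t) : Legal t (shift s [k]) :=
  fun q j d hq => h (k :: q) j d (by simp [hk, hq])

theorem SIprop.child {pref : N → O → O → Prop} {i : N} {cs : List (GameTree N O)}
    {s s' : Profile} (h : SIprop (node i cs) pref s s') {k : ℕ} {t : GameTree N O}
    (hk : cs[k]? = some t) : SIprop t pref (shift s [k]) (shift s' [k]) :=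
  fun q j d hq => h (k :: q) j d (by simp [hk, hq])

def changeTimes (T : GameTree N O) (f : ℕ → Profile) : Set ℕ :=
  {n | ∃ p, Differs T (f n) (f (n + 1)) p}

def childChangeTimes (cs : List (GameTree N O)) (f : ℕ → Profile) : Set ℕ :=
  ⋃ k : Fin cs.length, changeTimes cs[(k : ℕ)] (fun n => shift (f n) [k])

theorem outcome_eq_of_changeTimes_lt {T : GameTree N O} {f : ℕ → Profile} {M : ℕ}
    (hM : ∀ m ∈ changeTimes T f, m < M) {n : ℕ} (hn : M ≤ n) :
    T.outcome (f n) = T.outcome (f M) := by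
  induction n, hn using Nat.le_induction with
  | base => rfl
  | succ n hn ih =>
    refine (outcome_congr fun p j d hp => ?_).symm.trans ih
    by_contra hne
    exact absurd (hM n ⟨p, ⟨j, d, hp⟩, hne⟩) (by omega)

theorem changeTimes_node_subset (i : N) (cs : List (GameTree N O)) (f : ℕ → Profile) :
    changeTimes (node i cs) f ⊆ {n | f n [] ≠ f (n + 1) []} ∪ childChangeTimes cs f := by
  rintro n ⟨_ | ⟨k, q⟩, ⟨j, d, hp⟩, hne⟩
  · exact Or.inl hne
  · obtain ⟨t, hk, hq⟩ := Option.bind_eq_some_iff.mp (subtree_node_cons i cs k q ▸ hp)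
    obtain ⟨hlt, rfl⟩ := List.getElem?_eq_some_iff.mp hk
    exact Or.inr (Set.mem_iUnion.mpr ⟨⟨k, hlt⟩, q, ⟨j, d, hq⟩, hne⟩)

theorem finite_setOf_root_ne_of_childChangeTimes_lt {pref : N → O → O → Prop} {i : N}
    (hac : Acyclic (pref i)) {cs : List (GameTree N O)} {f : ℕ → Profile}
    (hlegal : ∀ n, Legal (node i cs) (f n))
    (hSI : ∀ n, SIprop (node i cs) pref (f n) (f (n + 1)))
    {M : ℕ} (hM : ∀ m ∈ childChangeTimes cs f, m < M) :
    {n | f n [] ≠ f (n + 1) []}.Finite := by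
  set w : ℕ → Option O := fun k => (cs[k]?).bind (outcome · (shift (f M) [k]))
  have hw : ∀ n, M ≤ n → outcome (node i cs) (f n) = w (f n []) := fun n hn => by
    have hlt : f n [] < cs.length := hlegal n [] i cs rfl
    simp only [w, outcome_node, List.getElem?_eq_getElem hlt, Option.bind_some]
    exact outcome_eq_of_changeTimes_lt
      (fun m hm => hM m (Set.mem_iUnion.mpr ⟨⟨_, hlt⟩, hm⟩)) hn
  refine ((hac.map (Option.some_injective O)).comap w).finite_setOf_ne_succ (M := M) ?_
    fun n hn hne => ?_
  · exact (Set.finite_Iio cs.length).subset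
      (Set.range_subset_iff.mpr fun n => hlegal n [] i cs rfl)
  · obtain ⟨x, y, hx, hy, hxy⟩ := hSI n [] i cs rfl hne
    rw [shift_nil, hw n hn] at hx
    rw [shift_nil, hw (n + 1) (by omega)] at hy
    exact ⟨x, y, hxy, hx.symm, hy.symm⟩

theorem changeTimes_finite {pref : N → O → O → Prop} (hac : ∀ i, Acyclic (pref i))
    (T : GameTree N O) {f : ℕ → Profile} (hlegal : ∀ n, Legal T (f n))
    (hSI : ∀ n, SIprop T pref (f n) (f (n + 1))) : (changeTimes T f).Finite := by
  induction T using induction_on_children generalizing f with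
  | leaf o =>
    refine Set.finite_empty.subset ?_
    rintro n ⟨_ | _, ⟨j, d, hp⟩, -⟩ <;> simp [subtree] at hp
  | node i cs ih =>
    have hchildren : (childChangeTimes cs f).Finite :=
      Set.finite_iUnion fun k =>
        have hk := List.getElem?_eq_getElem k.isLt
        ih _ (List.getElem_mem k.isLt) (fun n => Legal.child (hlegal n) hk)
          (fun n => SIprop.child (hSI n) hk)
    obtain ⟨M, hM⟩ := hchildren.bddAbove
    have hroot := finite_setOf_root_ne_of_childChangeTimes_lt (hac i) hlegal hSI (M := M + 1)
      fun m hm => Nat.lt_succ_of_le (hM hm)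
    exact (hroot.union hchildren).subset (changeTimes_node_subset i cs f)

end GameTree
end SeqGame

open SeqGame GameTree in
/-- If all the preferences are acyclic, the SI-dynamics terminates. -/
theorem stmt_2 {N O : Type} (T : GameTree N O) (pref : N → O → O → Prop)
    (hac : ∀ i, Acyclic (pref i)) :
    Terminates (XDyn {Upd.SI} T pref) := by
  rintro ⟨f, hf⟩
  have hfinite := changeTimes_finite hac T (fun n => (hf n).1) fun n => (hf n).2.2.2 .SI rfl
  exact Set.infinite_univ (hfinite.subset fun n _ => (hf n).2.2.1)
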